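/- Suppose the stated subgradient inclusions hold. Then ‖x^k − x⁺‖ ≤ γ_{k+1} ‖(1/γ_k)(F_k(x^{k-1}) − F_k(x^k)) + Aᵀ(u⁺ − u)‖. -/

import Mathlib

open scoped RealInnerProductSpace
open ContinuousLinearMap

noncomputable section

/-!
Write `s` and `s⁺` for the two subgradients of `f1` at `x^k` and `x⁺`. Monotonicity of the
subdifferential gives `0 ≤ ⟪s - s⁺, x^k - x⁺⟫`, and `s - s⁺ = v - (1/γ_{k+1}) (x^k - x⁺)`, where
`v` is the vector on the right-hand side. Hence `‖x^k - x⁺‖² ≤ γ_{k+1} ⟪v, x^k - x⁺⟫`, and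
Cauchy–Schwarz finishes.
-/

section Subgradient

variable {E : Type*} [NormedAddCommGroup E] [InnerProductSpace ℝ E]

def IsSubgradient (f : E → ℝ) (s x : E) : Prop :=
  ∀ w, f x + ⟪s, w - x⟫ ≤ f w

theorem IsSubgradient.inner_sub_nonneg {f : E → ℝ} {s t x y : E}
    (hs : IsSubgradient f s x) (ht : IsSubgradient f t y) : 0 ≤ ⟪s - t, x - y⟫ := by
  have hsy := hs y
  have htx := ht x
  rw [← neg_sub x y, inner_neg_right] at hsy
  rw [inner_sub_left]
  linarith

end Subgradient

theorem norm_le_mul_norm_of_sq_le_mul_inner {E : Type*} [NormedAddCommGroup E]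
    [InnerProductSpace ℝ E] {γ : ℝ} (hγ : 0 ≤ γ) {v d : E} (h : ‖d‖ ^ 2 ≤ γ * ⟪v, d⟫) :
    ‖d‖ ≤ γ * ‖v‖ := by
  rcases (norm_nonneg d).eq_or_lt with hd | hd
  · rw [← hd]
    positivity
  · have hcs : ‖d‖ * ‖d‖ ≤ (γ * ‖v‖) * ‖d‖ := by
      calc ‖d‖ * ‖d‖ = ‖d‖ ^ 2 := (sq _).symm
        _ ≤ γ * ⟪v, d⟫ := h
        _ ≤ γ * (‖v‖ * ‖d‖) := mul_le_mul_of_nonneg_left (real_inner_le_norm v d) hγ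
        _ = (γ * ‖v‖) * ‖d‖ := (mul_assoc _ _ _).symm
    exact le_of_mul_le_mul_right hcs hd

theorem alia_consecutive_iterate_bound_general {p r : ℕ}
    (f1 f2 : EuclideanSpace ℝ (Fin p) → ℝ)
    (A : EuclideanSpace ℝ (Fin p) →L[ℝ] EuclideanSpace ℝ (Fin r))
    (γk γk1 : ℝ) (hγk : 0 < γk) (hγk1 : 0 < γk1)
    (xm xk xp : EuclideanSpace ℝ (Fin p)) (u up : EuclideanSpace ℝ (Fin r))
    (hsub1 : ∀ w, f1 xk
        + ⟪(1/γk) • ((xm - γk • gradient f2 xm) - xk) - adjoint A u, w - xk⟫ ≤ f1 w)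
    (hsub2 : ∀ w, f1 xp
        + ⟪(1/γk1) • ((xk - γk1 • gradient f2 xk) - xp) - adjoint A up, w - xp⟫ ≤ f1 w) :
    ‖xk - xp‖
      ≤ γk1 * ‖(1/γk) • ((xm - γk • gradient f2 xm) - (xk - γk • gradient f2 xk))
          + adjoint A (up - u)‖ := by
  set v := (1/γk) • ((xm - γk • gradient f2 xm) - (xk - γk • gradient f2 xk))
      + adjoint A (up - u)
  have hdiff : (1/γk) • ((xm - γk • gradient f2 xm) - xk) - adjoint A u
      - ((1/γk1) • ((xk - γk1 • gradient f2 xk) - xp) - adjoint A up)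
      = v - (1/γk1) • (xk - xp) := by
    simp only [v, map_sub]
    match_scalars <;> field_simp
  have hmono := IsSubgradient.inner_sub_nonneg hsub1 hsub2
  rw [hdiff, inner_sub_left, real_inner_smul_left, real_inner_self_eq_norm_sq] at hmono
  refine norm_le_mul_norm_of_sq_le_mul_inner hγk1.le ?_
  calc ‖xk - xp‖ ^ 2 = γk1 * ((1/γk1) * ‖xk - xp‖ ^ 2) := by field_simp
    _ ≤ γk1 * ⟪v, xk - xp⟫ := by gcongr; linarith

/-- Lemma 3, consequence. Under the subgradient inclusions
coming from the optimality conditions of two consecutive ALiA `x`-updates, with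
`F_k(z) = z − γ_k ∇f2(z)`, one has
`‖x^k − x⁺‖ ≤ γ_{k+1} ‖(1/γ_k)(F_k(x^{k-1}) − F_k(x^k)) + Aᵀ(u⁺ − u)‖`. -/
theorem alia_consecutive_iterate_bound {p r : ℕ}
    (f1 f2 : EuclideanSpace ℝ (Fin p) → ℝ)
    (hf1 : ConvexOn ℝ Set.univ f1) (hf2 : Differentiable ℝ f2)
    (A : EuclideanSpace ℝ (Fin p) →L[ℝ] EuclideanSpace ℝ (Fin r))
    (γk γk1 : ℝ) (hγk : 0 < γk) (hγk1 : 0 < γk1)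
    (xm xk xp : EuclideanSpace ℝ (Fin p)) (u up : EuclideanSpace ℝ (Fin r))
    (hsub1 : ∀ w, f1 xk
        + ⟪(1/γk) • ((xm - γk • gradient f2 xm) - xk) - adjoint A u, w - xk⟫ ≤ f1 w)
    (hsub2 : ∀ w, f1 xp
        + ⟪(1/γk1) • ((xk - γk1 • gradient f2 xk) - xp) - adjoint A up, w - xp⟫ ≤ f1 w) :
    ‖xk - xp‖
      ≤ γk1 * ‖(1/γk) • ((xm - γk • gradient f2 xm) - (xk - γk • gradient f2 xk))
          + adjoint A (up - u)‖ :=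
  alia_consecutive_iterate_bound_general f1 f2 A γk γk1 hγk hγk1 xm xk xp u up hsub1 hsub2
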